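/- arXiv:1805.06692 — 2 statements merged into one kernel-verified Lean document; each statement's English description precedes it below -/
import Mathlib

section
/- (Ryser's formula) For an n×n matrix X = (x_{ij}) of variables, the permanent satisfies perm(X) = (−1)^n · Σ_{S ⊆ [n]} (−1)^{|S|} · ∏_{i=1}^n (Σ_{j ∈ S} x_{ij}). -/
/-!
Expanding each product, `∏ i, ∑ j ∈ S, x i j` is the sum of `∏ i, x i (f i)` over the maps `f`
with image in `S`. After exchanging the sums, the coefficient of `f` is `∑_{S ⊇ im f} (-1)^|S|`,
which vanishes unless `f` is surjective, i.e. a permutation, where it equals `(-1)^n`.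
-/

/-- The permanent of a square matrix over a commutative ring. -/
def perm {d : ℕ} {R : Type*} [CommRing R] (T : Matrix (Fin d) (Fin d) R) : R :=
  ∑ σ : Equiv.Perm (Fin d), ∏ i, T i (σ i)

open Finset

theorem sum_powerset_neg_one_pow_card_eq_ite {α R : Type*} [DecidableEq α] [CommRing R]
    (s : Finset α) : ∑ t ∈ s.powerset, (-1 : R) ^ #t = if s = ∅ then 1 else 0 := by
  have h := congrArg (Int.cast : ℤ → R) (sum_powerset_neg_one_pow_card (x := s))
  push_cast at h
  rw [h]

section

variable {ι R : Type*} [Fintype ι] [DecidableEq ι] [CommRing R]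

theorem sum_neg_one_pow_card_of_superset (A : Finset ι) :
    ∑ S with A ⊆ S, (-1 : R) ^ #S = if A = univ then (-1) ^ Fintype.card ι else 0 := by
  have hcompl (T : Finset ι) : (-1 : R) ^ #Tᶜ = (-1) ^ Fintype.card ι * (-1) ^ #T := by
    rw [← card_add_card_compl T, pow_add, mul_right_comm, ← mul_pow, neg_one_mul, neg_neg,
      one_pow, one_mul]
  calc ∑ S with A ⊆ S, (-1 : R) ^ #S
      = ∑ T ∈ Aᶜ.powerset, (-1 : R) ^ #Tᶜ := by
        refine sum_nbij' compl compl ?_ ?_ ?_ ?_ ?_ <;> simp [subset_compl_comm]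
    _ = (-1) ^ Fintype.card ι * if Aᶜ = ∅ then 1 else 0 := by
        simp_rw [hcompl, ← mul_sum, sum_powerset_neg_one_pow_card_eq_ite]
    _ = if A = univ then (-1) ^ Fintype.card ι else 0 := by
        simp [compl_eq_empty_iff]

theorem prod_sum_eq_sum_maps_into {α : Type*} [CommSemiring α] (X : Matrix ι ι α)
    (S : Finset ι) :
    ∏ i, ∑ j ∈ S, X i j = ∑ f : ι → ι, if univ.image f ⊆ S then ∏ i, X i (f i) else 0 := by
  rw [prod_univ_sum (t := fun _ => S) (f := fun i j => X i j), ← sum_filter]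
  congr 1
  ext f
  simp [Fintype.mem_piFinset, image_subset_iff]

theorem sum_surjective_eq_sum_perm {M : Type*} [AddCommMonoid M] (g : (ι → ι) → M) :
    ∑ f : ι → ι with Function.Surjective f, g f = ∑ σ : Equiv.Perm ι, g σ := by
  symm
  refine sum_bij (fun σ _ => σ) (fun σ _ => by simpa using σ.surjective)
    (fun σ _ τ _ h => Equiv.coe_fn_injective h) (fun f hf => ?_) (fun _ _ => rfl)
  simp only [mem_filter, mem_univ, true_and, Finite.surjective_iff_bijective] at hf
  exact ⟨Equiv.ofBijective f hf, mem_univ _, rfl⟩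

theorem sum_neg_one_pow_card_mul_prod_sum (X : Matrix ι ι R) :
    ∑ S : Finset ι, (-1 : R) ^ #S * ∏ i, ∑ j ∈ S, X i j =
      (-1) ^ Fintype.card ι * ∑ σ : Equiv.Perm ι, ∏ i, X i (σ i) := by
  have hsurj (f : ι → ι) : univ.image f = univ ↔ Function.Surjective f := by
    simp [eq_univ_iff_forall, Function.Surjective]
  calc ∑ S : Finset ι, (-1 : R) ^ #S * ∏ i, ∑ j ∈ S, X i j
      = ∑ f : ι → ι, (∑ S with univ.image f ⊆ S, (-1 : R) ^ #S) * ∏ i, X i (f i) := by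
        simp_rw [prod_sum_eq_sum_maps_into, mul_sum, mul_ite, mul_zero, sum_filter, sum_mul, ite_mul,
          zero_mul]
        exact sum_comm
    _ = ∑ f : ι → ι with Function.Surjective f, (-1) ^ Fintype.card ι * ∏ i, X i (f i) := by
        simp_rw [sum_neg_one_pow_card_of_superset, hsurj, ite_mul, zero_mul, sum_filter]
    _ = (-1) ^ Fintype.card ι * ∑ σ : Equiv.Perm ι, ∏ i, X i (σ i) := by
        rw [sum_surjective_eq_sum_perm (fun f => (-1) ^ Fintype.card ι * ∏ i, X i (f i)), mul_sum]

end

theorem ryser_formula_general {n : ℕ} {R : Type*} [CommRing R]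
    (X : Matrix (Fin n) (Fin n) (MvPolynomial (Fin n × Fin n) R)) :
    perm X =
      (-1 : MvPolynomial (Fin n × Fin n) R) ^ n *
        ∑ S : Finset (Fin n), (-1 : MvPolynomial (Fin n × Fin n) R) ^ S.card *
          ∏ i, ∑ j ∈ S, X i j := by
  rw [sum_neg_one_pow_card_mul_prod_sum, Fintype.card_fin, ← mul_assoc, ← mul_pow, neg_one_mul,
    neg_neg, one_pow, one_mul, perm]

/-- Ryser's formula for the permanent of the `n × n` matrix of variables `x_{ij}`. -/
theorem ryser_formula {n : ℕ} {R : Type*} [CommRing R]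
    (X : Matrix (Fin n) (Fin n) (MvPolynomial (Fin n × Fin n) R))
    (hX : ∀ i j, X i j = MvPolynomial.X (i, j)) :
    perm X =
      (-1 : MvPolynomial (Fin n × Fin n) R) ^ n *
        ∑ S : Finset (Fin n), (-1 : MvPolynomial (Fin n × Fin n) R) ^ S.card *
          ∏ i, ∑ j ∈ S, X i j :=
  ryser_formula_general X
end

section
/- Let C_1 = ∏_{i=1}^d L_i and C_2 = ∏_{i=1}^d L'_i be products of homogeneous linear forms over ℚ. Then the scaled Hadamard product satisfies C_1 ∘ˢ C_2 = Σ_{σ ∈ S_d} ∏_{i=1}^d (L_i ∘ˢ L'_{σ(i)}). -/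
open MvPolynomial

/-- The linear form `L = ∑ i, a i * x i`. -/
noncomputable def lin {n : ℕ} (a : Fin n → ℚ) : MvPolynomial (Fin n) ℚ :=
  ∑ i, MvPolynomial.C (a i) * MvPolynomial.X i

/-- `m! = e₁! ⋯ e_r!` for a monomial exponent vector `m`. -/
def mfact {n : ℕ} (m : Fin n →₀ ℕ) : ℕ := m.prod fun _ e => e.factorial

/-- The scaled Hadamard product `f ∘ˢ g = ∑ m, (m! · [m]f · [m]g) · m`. -/
noncomputable def shad {n : ℕ} (f g : MvPolynomial (Fin n) ℚ) :
    MvPolynomial (Fin n) ℚ :=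
  ∑ m ∈ f.support,
    MvPolynomial.monomial m ((mfact m : ℚ) * f.coeff m * g.coeff m)

/-!
Expanding the products, the coefficient of `x^m` in `∏ i, L i` is a sum over the maps
`f : Fin d → Fin n` whose fibers have sizes `m`. On the right-hand side, `σ ↦ f ∘ σ⁻¹` hits every
map with the same fiber sizes as `f` exactly `m!` times, since the stabilizer of `f` is the
product of the symmetric groups of its fibers; this is the factor `m!` of `∘ˢ`.
-/

open Finset Equiv Nat

section FiberCount

variable {ι κ : Type*} [Fintype ι]

noncomputable def fiberCount (f : ι → κ) : κ →₀ ℕ := ∑ i, Finsupp.single (f i) 1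

lemma fiberCount_apply [DecidableEq κ] (f : ι → κ) (k : κ) :
    fiberCount f k = #{i | f i = k} := by
  simp [fiberCount, Finsupp.finsetSum_apply, Finsupp.single_apply]

lemma fiberCount_comp_perm (f : ι → κ) (σ : Perm ι) : fiberCount (f ∘ σ) = fiberCount f :=
  Fintype.sum_equiv σ _ _ fun _ => rfl

lemma exists_perm_comp_eq_of_fiberCount_eq [DecidableEq κ] {f g : ι → κ}
    (h : fiberCount f = fiberCount g) : ∃ σ : Perm ι, g ∘ σ = f := by
  have hcard (k : κ) : Fintype.card {i // f i = k} = Fintype.card {i // g i = k} := by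
    simpa [fiberCount_apply, Fintype.card_subtype] using DFunLike.congr_fun h k
  exact ⟨ofFiberEquiv fun k => Fintype.equivOfCardEq (hcard k), funext (ofFiberEquiv_map _)⟩

end FiberCount

section PermCount

variable {ι κ : Type*} [Fintype ι] [DecidableEq ι] [DecidableEq κ]

lemma card_perm_comp_eq_comp (f : ι → κ) (τ : Perm ι) :
    #{σ : Perm ι | f ∘ σ = f ∘ τ} = #{σ : Perm ι | f ∘ σ = f} := by
  refine card_equiv (Equiv.mulRight τ⁻¹) fun σ => ?_
  simp only [mem_filter, mem_univ, true_and, coe_mulRight, Perm.coe_mul, Perm.inv_def,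
    ← Function.comp_assoc, comp_symm_eq]

lemma card_stabilizer_eq_prod_factorial [Fintype κ] (f : ι → κ) :
    #{σ : Perm ι | f ∘ σ = f} = (fiberCount f).prod fun _ e => e ! := by
  rw [← Fintype.card_subtype, DomMulAct.stabilizer_card, Finsupp.prod_fintype _ _ (by simp)]
  simp [fiberCount_apply, Fintype.card_subtype]

lemma image_comp_perm [Fintype κ] (f : ι → κ) :
    univ.image (fun σ : Perm ι => f ∘ σ) = ({g | fiberCount g = fiberCount f} : Finset _) := by
  ext g
  simp only [mem_image, mem_univ, true_and, mem_filter]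
  constructor
  · rintro ⟨σ, rfl⟩
    exact fiberCount_comp_perm f σ
  · exact exists_perm_comp_eq_of_fiberCount_eq

variable [Fintype κ]

lemma sum_perm_comp {M : Type*} [AddCommMonoid M] (f : ι → κ) (B : (ι → κ) → M) :
    ∑ σ : Perm ι, B (f ∘ σ) =
      (fiberCount f).prod (fun _ e => e !) • ∑ g with fiberCount g = fiberCount f, B g := by
  rw [Finset.sum_comp, image_comp_perm, smul_sum]
  refine sum_congr rfl fun g hg => ?_
  obtain ⟨τ, rfl⟩ := exists_perm_comp_eq_of_fiberCount_eq (mem_filter.mp hg).2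
  rw [card_perm_comp_eq_comp, card_stabilizer_eq_prod_factorial]

lemma sum_perm_prod_apply {R : Type*} [CommSemiring R] (b : ι → κ → R) (f : ι → κ) :
    ∑ σ : Perm ι, ∏ i, b (σ i) (f i) =
      (fiberCount f).prod (fun _ e => e !) •
        ∑ g with fiberCount g = fiberCount f, ∏ i, b i (g i) := calc
  _ = ∑ σ : Perm ι, ∏ i, b i ((f ∘ ⇑σ⁻¹) i) :=
    sum_congr rfl fun σ _ => Fintype.prod_equiv σ _ _ fun i => by simp
  _ = ∑ σ : Perm ι, ∏ i, b i ((f ∘ σ) i) :=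
    Fintype.sum_equiv (Equiv.inv _) _ _ fun _ => rfl
  _ = _ := sum_perm_comp f fun g => ∏ i, b i (g i)

end PermCount

section LinearForms

variable {n : ℕ}

lemma coeff_shad (f g : MvPolynomial (Fin n) ℚ) (m : Fin n →₀ ℕ) :
    coeff m (shad f g) = mfact m * coeff m f * coeff m g := by
  rw [shad, coeff_sum]
  simp only [coeff_monomial, sum_ite_eq', mem_support_iff]
  split_ifs with h
  · rfl
  · simp [not_not.mp h]

lemma lin_eq_sum_monomial (a : Fin n → ℚ) :
    lin a = ∑ j, monomial (Finsupp.single j 1) (a j) := by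
  simp only [lin, X, C_mul_monomial, mul_one]

lemma coeff_prod_lin {ι : Type*} [Fintype ι] [DecidableEq ι] (c : ι → Fin n → ℚ)
    (m : Fin n →₀ ℕ) :
    coeff m (∏ i, lin (c i)) = ∑ f with fiberCount f = m, ∏ i, c i (f i) := by
  simp only [lin_eq_sum_monomial, prod_univ_sum, Fintype.piFinset_univ, ← monomial_sum_prod,
    coeff_sum, coeff_monomial, sum_filter]
  rfl

lemma coeff_lin (a : Fin n → ℚ) (m : Fin n →₀ ℕ) :
    coeff m (lin a) = ∑ j with Finsupp.single j 1 = m, a j := by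
  simp only [lin_eq_sum_monomial, coeff_sum, coeff_monomial, sum_filter]

lemma shad_lin (a b : Fin n → ℚ) : shad (lin a) (lin b) = lin (a * b) := by
  ext m
  rw [coeff_shad, coeff_lin, coeff_lin, coeff_lin]
  by_cases hm : ∃ j, Finsupp.single j 1 = m
  · obtain ⟨j, rfl⟩ := hm
    simp [Finsupp.single_left_inj, mfact, filter_eq']
  · simp_all

end LinearForms

theorem shad_prod_linear_forms {n d : ℕ} (a b : Fin d → Fin n → ℚ) :
    shad (∏ i, lin (a i)) (∏ i, lin (b i)) =
      ∑ σ : Equiv.Perm (Fin d), ∏ i, shad (lin (a i)) (lin (b (σ i))) := by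
  ext m
  simp only [shad_lin, coeff_sum, coeff_shad, coeff_prod_lin, Pi.mul_apply, prod_mul_distrib]
  rw [sum_comm, mul_comm (mfact m : ℚ), mul_assoc, sum_mul]
  refine sum_congr rfl fun f hf => ?_
  rw [← mul_sum, sum_perm_prod_apply, (mem_filter.mp hf).2, nsmul_eq_mul, mfact]
end
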